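/- arXiv:2312.07438 — 3 statements merged into one kernel-verified Lean document; each statement's English description precedes it below -/
import Mathlib

section
/- Let X and H be n×n complex Hermitian matrices, let f : ℝ → ℝ be continuously differentiable on an open interval (a,b), and let α₀ ∈ ℝ. Suppose there is ε > 0 such that for every α with |α − α₀| < ε, all eigenvalues of X + αH lie in (a,b). Then the function α ↦ Tr(F(X + αH)) is differentiable at α₀ and its derivative equals Tr(H · F'(X + α₀H)), where F and F' are the matrix extensions of f and f' respectively. -/
/-!
For a polynomial `p`, cyclicity of the trace gives
`d/dα Tr p(X + αH) = Tr(H p'(X + αH))`. On a closed ball around `α₀` the spectra of `X + αH`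
stay in one compact interval `[c, d] ⊂ (a, b)`, because the set of pairs `(α, t)` with `t` in the
spectrum is closed and bounded. There `f` and `f'` are uniform limits of `pₘ` and `pₘ'` for
polynomials `pₘ`, and `Tr(B F(A))` moves by at most a constant times `sup |F - G|` on the spectrum
of `A` when `F` is replaced by `G`; so the derivatives converge uniformly near `α₀` and the limit
can be differentiated termwise.
-/

open Matrix

/-- The matrix extension `F` of `f : ℝ → ℝ`: for Hermitian `A = U Diag(λ) U*`,
`F(A) := U Diag(f(λᵢ)) U*` (junk value `0` if `A` is not Hermitian). -/
noncomputable def matExt {𝕜 : Type*} [RCLike 𝕜] {n : Type*} [Fintype n] [DecidableEq n]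
    (f : ℝ → ℝ) (A : Matrix n n 𝕜) : Matrix n n 𝕜 :=
  if hA : A.IsHermitian then
    (hA.eigenvectorUnitary : Matrix n n 𝕜) *
      Matrix.diagonal (fun i => (f (hA.eigenvalues i) : 𝕜)) *
      star (hA.eigenvectorUnitary : Matrix n n 𝕜)
  else 0

/-- The eigenvalues of a Hermitian matrix (junk value `0` if not Hermitian). -/
noncomputable def eigs {𝕜 : Type*} [RCLike 𝕜] {n : Type*} [Fintype n] [DecidableEq n]
    (A : Matrix n n 𝕜) : n → ℝ :=
  if hA : A.IsHermitian then hA.eigenvalues else 0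

open Polynomial Set Filter Topology

-- Any norm inducing the product topology would do.
attribute [local instance] Matrix.linftyOpNormedRing Matrix.linftyOpNormedAlgebra

theorem tendstoUniformlyOn_of_forall_dist_le {ι α β : Type*} [PseudoMetricSpace β]
    {l : Filter ι} {F : ι → α → β} {f : α → β} {s : Set α} {u : ι → ℝ}
    (hu : Tendsto u l (𝓝 0)) (h : ∀ i, ∀ x ∈ s, dist (f x) (F i x) ≤ u i) :
    TendstoUniformlyOn F f l s :=
  Metric.tendstoUniformlyOn_iff.2 fun _ hε =>
    (hu.eventually (gt_mem_nhds hε)).mono fun i hi x hx => (h i x hx).trans_lt hi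

theorem Polynomial.exists_derivative_eq {K : Type*} [Field K] [CharZero K] (q : K[X]) :
    ∃ p : K[X], derivative p = q := by
  induction q using Polynomial.induction_on' with
  | add q r hq hr =>
    obtain ⟨p, rfl⟩ := hq
    obtain ⟨p', rfl⟩ := hr
    exact ⟨p + p', derivative_add⟩
  | monomial k a =>
    refine ⟨monomial (k + 1) (a / (k + 1)), ?_⟩
    rw [derivative_monomial, Nat.add_sub_cancel, Nat.cast_succ,
      div_mul_cancel₀ _ (Nat.cast_add_one_ne_zero k)]

theorem IsCompact.exists_Icc_subset_Ioo {K : Set ℝ} {a b : ℝ} (hK : IsCompact K)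
    (hKab : K ⊆ Ioo a b) : ∃ c d, K ⊆ Icc c d ∧ Icc c d ⊆ Ioo a b := by
  rcases K.eq_empty_or_nonempty with rfl | hne
  · exact ⟨1, 0, empty_subset _, by simp⟩
  exact ⟨sInf K, sSup K, fun x hx => ⟨csInf_le hK.bddBelow hx, le_csSup hK.bddAbove hx⟩,
    Icc_subset_Ioo (hKab (hK.sInf_mem hne)).1 (hKab (hK.sSup_mem hne)).2⟩

theorem exists_polynomial_near_of_hasDerivAt {f f' : ℝ → ℝ} {c d : ℝ}
    (hf : ∀ x ∈ Icc c d, HasDerivAt f (f' x) x) (hf' : ContinuousOn f' (Icc c d))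
    {ε : ℝ} (hε : 0 < ε) :
    ∃ p : ℝ[X], ∀ x ∈ Icc c d, |p.eval x - f x| ≤ ε ∧ |(derivative p).eval x - f' x| ≤ ε := by
  set η := ε / (|d - c| + 1)
  have hη : 0 < η := by positivity
  have hηε : η * |d - c| ≤ ε := by
    rw [div_mul_eq_mul_div, div_le_iff₀ (by positivity)]
    nlinarith [abs_nonneg (d - c)]
  obtain ⟨q, hq⟩ := exists_polynomial_near_of_continuousOn c d f' hf' η hη
  obtain ⟨p₀, hp₀⟩ := q.exists_derivative_eq
  set p := p₀ + C (f c - p₀.eval c)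
  have hp : derivative p = q := by simp [p, hp₀]
  refine ⟨p, fun x hx => ⟨?_, hp ▸ (hq x hx).le.trans ?_⟩⟩
  · have hmvt := norm_image_sub_le_of_norm_deriv_le_segment'
      (f := fun y => p.eval y - f y) (C := η)
      (fun y hy => ((p.hasDerivAt y).sub (hf y hy)).hasDerivWithinAt)
      (fun y hy => by rw [hp]; exact (hq y (Ico_subset_Icc_self hy)).le) x hx
    have hpc : p.eval c - f c = 0 := by simp [p]
    rw [hpc, sub_zero, Real.norm_eq_abs] at hmvt
    refine hmvt.trans (le_trans ?_ hηε)
    gcongr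
    exact (sub_le_sub_right hx.2 c).trans (le_abs_self _)
  · calc η ≤ η * (|d - c| + 1) := le_mul_of_one_le_right hη.le (by linarith [abs_nonneg (d - c)])
      _ = ε := div_mul_cancel₀ _ (by positivity)

theorem exists_polynomial_tendstoUniformlyOn_of_hasDerivAt {f f' : ℝ → ℝ} {c d : ℝ}
    (hf : ∀ x ∈ Icc c d, HasDerivAt f (f' x) x) (hf' : ContinuousOn f' (Icc c d)) :
    ∃ p : ℕ → ℝ[X],
      TendstoUniformlyOn (fun m x => (p m).eval x) f atTop (Icc c d) ∧
      TendstoUniformlyOn (fun m x => (derivative (p m)).eval x) f' atTop (Icc c d) := by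
  choose p hp using fun m : ℕ =>
    exists_polynomial_near_of_hasDerivAt hf hf' (Nat.one_div_pos_of_nat (n := m))
  refine ⟨p, tendstoUniformlyOn_of_forall_dist_le tendsto_one_div_add_atTop_nhds_zero_nat
      fun m x hx => ?_, tendstoUniformlyOn_of_forall_dist_le
      tendsto_one_div_add_atTop_nhds_zero_nat fun m x hx => ?_⟩
  · rw [Real.dist_eq, abs_sub_comm]; exact (hp m x hx).1
  · rw [Real.dist_eq, abs_sub_comm]; exact (hp m x hx).2

theorem IsCompact.biUnion_spectrum {𝕜 A X : Type*} [NontriviallyNormedField 𝕜] [ProperSpace 𝕜]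
    [NormedRing A] [NormedAlgebra 𝕜 A] [CompleteSpace A] [TopologicalSpace X]
    {s : Set X} (hs : IsCompact s) {a : X → A} (ha : Continuous a) :
    IsCompact (⋃ x ∈ s, spectrum 𝕜 (a x)) := by
  obtain ⟨R, hR⟩ := hs.exists_bound_of_continuousOn ha.continuousOn
  have hT : IsClosed {p : X × 𝕜 | p.2 ∈ spectrum 𝕜 (a p.1)} :=
    (Units.isOpen.preimage (by fun_prop :
      Continuous fun p : X × 𝕜 => algebraMap 𝕜 A p.2 - a p.1)).isClosed_compl
  have hunion : ⋃ x ∈ s, spectrum 𝕜 (a x) =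
      Prod.snd '' (s ×ˢ Metric.closedBall 0 (R * ‖(1 : A)‖) ∩ {p | p.2 ∈ spectrum 𝕜 (a p.1)}) := by
    ext t
    simp only [mem_iUnion, mem_image, mem_inter_iff, mem_prod, mem_ofPred_eq, Prod.exists,
      exists_eq_right, mem_closedBall_zero_iff, exists_prop]
    refine ⟨fun ⟨x, hx, ht⟩ => ⟨x, ⟨hx, ?_⟩, ht⟩, fun ⟨x, ⟨hx, _⟩, ht⟩ => ⟨x, hx, ht⟩⟩
    exact (spectrum.norm_le_norm_mul_of_mem ht).trans
      (mul_le_mul_of_nonneg_right (hR x hx) (norm_nonneg _))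
  rw [hunion]
  exact ((hs.prod (isCompact_closedBall _ _)).inter_right hT).image continuous_snd

theorem IsCompact.exists_Icc_forall_spectrum_subset {A X : Type*} [NormedRing A]
    [NormedAlgebra ℝ A] [CompleteSpace A] [TopologicalSpace X] {s : Set X} (hs : IsCompact s)
    {a : X → A} (ha : Continuous a) {l u : ℝ} (hlu : ∀ x ∈ s, spectrum ℝ (a x) ⊆ Ioo l u) :
    ∃ c d, Icc c d ⊆ Ioo l u ∧ ∀ x ∈ s, spectrum ℝ (a x) ⊆ Icc c d := by
  obtain ⟨c, d, hK, hcd⟩ := (hs.biUnion_spectrum ha).exists_Icc_subset_Ioo (iUnion₂_subset hlu)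
  exact ⟨c, d, hcd, fun x hx =>
    (subset_biUnion_of_mem (u := fun x => spectrum ℝ (a x)) hx).trans hK⟩

section MatrixFunction

variable {𝕜 N : Type*} [RCLike 𝕜] [Fintype N] [DecidableEq N]

theorem Matrix.IsHermitian.matExt_eq_cfc {A : Matrix N N 𝕜} (hA : A.IsHermitian) (f : ℝ → ℝ) :
    matExt f A = cfc f A := by
  rw [hA.cfc_eq, matExt, dif_pos hA, IsHermitian.cfc, Unitary.conjStarAlgAut_apply]
  rfl

theorem Matrix.IsHermitian.matExt_eval {A : Matrix N N 𝕜} (hA : A.IsHermitian) (p : ℝ[X]) :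
    matExt p.eval A = aeval A p := by
  rw [hA.matExt_eq_cfc, cfc_polynomial p A hA.isSelfAdjoint]

theorem Matrix.IsHermitian.spectrum_real_subset_iff {A : Matrix N N 𝕜} (hA : A.IsHermitian)
    {S : Set ℝ} : spectrum ℝ A ⊆ S ↔ ∀ i, eigs A i ∈ S := by
  rw [hA.spectrum_real_eq_range_eigenvalues, range_subset_iff, eigs, dif_pos hA]

theorem matExt_sub (f g : ℝ → ℝ) (A : Matrix N N 𝕜) :
    matExt (f - g) A = matExt f A - matExt g A := by
  unfold matExt
  split_ifs
  · simp only [Pi.sub_apply, RCLike.ofReal_sub, ← diagonal_sub, Matrix.mul_sub, Matrix.sub_mul]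
  · rw [sub_zero]

theorem Matrix.IsHermitian.norm_matExt_apply_le {A : Matrix N N 𝕜} (hA : A.IsHermitian)
    {φ : ℝ → ℝ} {δ : ℝ} (hφ : ∀ x ∈ spectrum ℝ A, |φ x| ≤ δ) (j k : N) :
    ‖matExt φ A j k‖ ≤ Fintype.card N * δ := by
  have hU := fun i j => entry_norm_bound_of_unitary hA.eigenvectorUnitary.2 i j
  rw [matExt, dif_pos hA, mul_apply]
  simp only [mul_diagonal, star_apply]
  calc _ ≤ ∑ _i : N, δ := norm_sum_le_of_le _ fun i _ => ?_
    _ = Fintype.card N * δ := by rw [Finset.sum_const, Finset.card_univ, nsmul_eq_mul]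
  have hφi := hφ _ (hA.eigenvalues_mem_spectrum_real i)
  rw [norm_mul, norm_mul, norm_star, RCLike.norm_ofReal]
  calc _ ≤ 1 * δ * 1 :=
        mul_le_mul (mul_le_mul (hU j i) hφi (abs_nonneg _) zero_le_one) (hU k i)
          (norm_nonneg _) (by linarith [abs_nonneg (φ (hA.eigenvalues i))])
    _ = δ := by ring

theorem Matrix.IsHermitian.norm_trace_mul_matExt_le {A : Matrix N N 𝕜} (hA : A.IsHermitian)
    (B : Matrix N N 𝕜) {φ : ℝ → ℝ} {δ : ℝ} (hφ : ∀ x ∈ spectrum ℝ A, |φ x| ≤ δ) :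
    ‖(B * matExt φ A).trace‖ ≤ (∑ j, ∑ k, ‖B j k‖) * (Fintype.card N * δ) := by
  simp only [Matrix.trace, diag_apply, mul_apply, Finset.sum_mul]
  refine (norm_sum_le _ _).trans (Finset.sum_le_sum fun j _ => ?_)
  refine (norm_sum_le _ _).trans (Finset.sum_le_sum fun k _ => ?_)
  rw [norm_mul]
  exact mul_le_mul_of_nonneg_left (hA.norm_matExt_apply_le hφ k j) (norm_nonneg _)

theorem tendstoUniformlyOn_trace_mul_matExt {ι T : Type*} {l : Filter ι} (B : Matrix N N 𝕜)
    {A : T → Matrix N N 𝕜} {s : Set T} {K : Set ℝ}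
    (hA : ∀ t ∈ s, (A t).IsHermitian ∧ spectrum ℝ (A t) ⊆ K)
    {g : ι → ℝ → ℝ} {g₀ : ℝ → ℝ} (hg : TendstoUniformlyOn g g₀ l K) :
    TendstoUniformlyOn (fun i t => (B * matExt (g i) (A t)).trace)
      (fun t => (B * matExt g₀ (A t)).trace) l s := by
  set C := (∑ j, ∑ k, ‖B j k‖) * Fintype.card N
  have hC : 0 ≤ C := by positivity
  rw [Metric.tendstoUniformlyOn_iff] at hg ⊢
  intro ε hε
  filter_upwards [hg (ε / (C + 1)) (by positivity)] with i hi t ht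
  obtain ⟨hAt, hAK⟩ := hA t ht
  rw [dist_eq_norm, ← trace_sub, ← Matrix.mul_sub, ← matExt_sub]
  calc _ ≤ C * (ε / (C + 1)) := by
        rw [mul_assoc]
        exact hAt.norm_trace_mul_matExt_le B fun x hx => (Real.dist_eq _ _ ▸ hi x (hAK hx)).le
    _ < ε := by
        rw [mul_div_assoc', div_lt_iff₀ (by positivity)]
        nlinarith

theorem HasDerivAt.matrix_trace {M : ℝ → Matrix N N 𝕜} {M' : Matrix N N 𝕜} {t : ℝ}
    (h : HasDerivAt M M' t) : HasDerivAt (fun t => (M t).trace) M'.trace t :=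
  (Matrix.traceLinearMap N ℝ 𝕜).toContinuousLinearMap.hasFDerivAt.comp_hasDerivAt t h

theorem HasDerivAt.trace_aeval {M : ℝ → Matrix N N 𝕜} {M' : Matrix N N 𝕜} {t : ℝ}
    (h : HasDerivAt M M' t) (p : ℝ[X]) :
    HasDerivAt (fun t => (aeval (M t) p).trace) (M' * aeval (M t) (derivative p)).trace t := by
  induction p using Polynomial.induction_on' with
  | add p q hp hq => simpa only [map_add, Matrix.mul_add, trace_add] using hp.fun_add hq
  | monomial k a =>
    have hcycle : ∀ i ∈ Finset.range k,
        (M t ^ (k.pred - i) * M' * M t ^ i).trace = (M' * M t ^ (k - 1)).trace := by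
      intro i hi
      rw [trace_mul_cycle, ← pow_add, trace_mul_comm, Nat.pred_eq_sub_one,
        Nat.add_sub_of_le (Nat.le_sub_one_of_lt (Finset.mem_range.1 hi))]
    have hpow := (h.fun_pow' k).matrix_trace.fun_const_smul a
    simp only [trace_sum, Finset.sum_congr rfl hcycle, Finset.sum_const, Finset.card_range] at hpow
    simp only [aeval_monomial, derivative_monomial, ← Algebra.smul_def, trace_smul,
      Matrix.mul_smul]
    refine hpow.congr_deriv ?_
    rw [mul_smul, Nat.cast_smul_eq_nsmul]

end MatrixFunction

/-- If `X, H` are Hermitian, `f` is `C¹` on `(a,b)`, and all eigenvalues of `X + αH`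
lie in `(a,b)` for `α` near `α₀`, then `α ↦ Tr F(X + αH)` is differentiable at `α₀`
with derivative `Tr(H ⬝ F'(X + α₀ H))`. -/
theorem trace_matExt_hasDerivAt {n : ℕ} (X H : Matrix (Fin n) (Fin n) ℂ)
    (hX : X.IsHermitian) (hH : H.IsHermitian)
    (a b : ℝ) (f : ℝ → ℝ) (hf : ContDiffOn ℝ 1 f (Set.Ioo a b))
    (α₀ : ℝ)
    (hspec : ∃ ε > 0, ∀ α : ℝ, |α - α₀| < ε →
      ∀ i, eigs (X + (α : ℂ) • H) i ∈ Set.Ioo a b) :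
    HasDerivAt (fun α : ℝ => (matExt f (X + (α : ℂ) • H)).trace)
      ((H * matExt (deriv f) (X + (α₀ : ℂ) • H)).trace) α₀ := by
  obtain ⟨ε, hε, hspec⟩ := hspec
  set M : ℝ → Matrix (Fin n) (Fin n) ℂ := fun α => X + (α : ℂ) • H
  have hM : ∀ α, (M α).IsHermitian := fun α => hX.add (hH.smul (Complex.conj_ofReal α))
  have hMd : ∀ α, HasDerivAt M H α := fun α => by
    have h := ((hasDerivAt_id α).ofReal_comp.smul_const H).const_add X
    rwa [Complex.ofReal_one, one_smul] at h
  set s := Metric.closedBall α₀ (ε / 2)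
  obtain ⟨c, d, hcd, hMcd⟩ := (isCompact_closedBall α₀ (ε / 2)).exists_Icc_forall_spectrum_subset
    (a := M) (by fun_prop) fun α hα => (hM α).spectrum_real_subset_iff.2 <|
      hspec α ((Metric.mem_closedBall.1 hα).trans_lt (half_lt_self hε))
  have hfd : ∀ x ∈ Ioo a b, HasDerivAt f (deriv f x) x := fun x hx =>
    ((hf.differentiableOn one_ne_zero).differentiableAt (isOpen_Ioo.mem_nhds hx)).hasDerivAt
  obtain ⟨p, hp, hp'⟩ := exists_polynomial_tendstoUniformlyOn_of_hasDerivAt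
    (fun x hx => hfd x (hcd hx)) ((hf.continuousOn_deriv_of_isOpen isOpen_Ioo le_rfl).mono hcd)
  have hMs : ∀ α ∈ s, (M α).IsHermitian ∧ spectrum ℝ (M α) ⊆ Icc c d :=
    fun α hα => ⟨hM α, hMcd α hα⟩
  have hMp : ∀ α (q : ℝ[X]), matExt q.eval (M α) = aeval (M α) q := fun α => (hM α).matExt_eval
  refine hasDerivAt_of_tendstoUniformlyOn (f := fun m α => (1 * matExt (p m).eval (M α)).trace)
    Metric.isOpen_ball ((tendstoUniformlyOn_trace_mul_matExt H hMs hp').mono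
      Metric.ball_subset_closedBall) (.of_forall fun m α _ => ?_) (fun α hα => ?_)
    (Metric.mem_ball_self (half_pos hε))
  · simpa only [one_mul, hMp] using (hMd α).trace_aeval (p m)
  · simpa only [one_mul] using ((tendstoUniformlyOn_trace_mul_matExt 1 hMs hp).tendsto_at
      (Metric.ball_subset_closedBall hα))
end

section
/- Let Z₁,…,Z_{n_z} be k×k complex Hermitian matrices with Zⱼ² = Zⱼ for each j and Σⱼ Zⱼ = I, and define 𝒵(δ) := Σⱼ Zⱼ δ Zⱼ. Then for every k×k Hermitian positive definite matrix δ, Tr(δ · ln(𝒵(δ))) = Tr(𝒵(δ) · ln(𝒵(δ))), where ln(M) for a Hermitian positive definite matrix M with spectral decomposition M = U Diag(λ₁,…,λ_k) U* is defined as U Diag(ln λ₁,…,ln λ_k) U*. -/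
/-!
Hermitian idempotents summing to the identity are pairwise orthogonal, so each `Zⱼ` commutes
with `𝒵(δ)` (both products equal `Zⱼ δ Zⱼ`), hence with `ln 𝒵(δ)`, which is a continuous functional
calculus of `𝒵(δ)`. Writing `δ = Σⱼ δ Zⱼ` and cycling the trace, `Tr(δ Zⱼ L) = Tr(Zⱼ δ Zⱼ L)`
for every `L` commuting with the `Zⱼ`.
-/

open Matrix
open scoped ComplexOrder

theorem matExt_eq_cfc {𝕜 n : Type*} [RCLike 𝕜] [Fintype n] [DecidableEq n]
    (f : ℝ → ℝ) (A : Matrix n n 𝕜) : matExt f A = cfc f A := by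
  by_cases hA : A.IsHermitian
  · rw [matExt, dif_pos hA, hA.cfc_eq, IsHermitian.cfc, Unitary.conjStarAlgAut_apply]
    rfl
  · rw [matExt, dif_neg hA]
    exact (cfc_apply_of_not_predicate A hA).symm

namespace OrthogonalIdempotents

variable {R ι : Type*} [Semiring R] [Fintype ι] {e : ι → R}

theorem mul_sum_mul_mul (he : OrthogonalIdempotents e) (a : R) (j : ι) :
    e j * ∑ i, e i * a * e i = e j * a * e j := by
  classical
  simp [Finset.mul_sum, ← mul_assoc, he.mul_eq]

theorem sum_mul_mul_mul (he : OrthogonalIdempotents e) (a : R) (j : ι) :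
    (∑ i, e i * a * e i) * e j = e j * a * e j := by
  classical
  simp [Finset.sum_mul, mul_assoc, he.mul_eq]

theorem commute_sum_mul_mul (he : OrthogonalIdempotents e) (a : R) (j : ι) :
    Commute (e j) (∑ i, e i * a * e i) :=
  (he.mul_sum_mul_mul a j).trans (he.sum_mul_mul_mul a j).symm

end OrthogonalIdempotents

namespace Matrix

open scoped MatrixOrder in
theorem completeOrthogonalIdempotents_of_isHermitian {𝕜 n ι : Type*} [RCLike 𝕜]
    [Fintype n] [DecidableEq n] [Fintype ι] [DecidableEq ι] {Z : ι → Matrix n n 𝕜}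
    (hherm : ∀ j, (Z j).IsHermitian) (hidem : ∀ j, IsIdempotentElem (Z j))
    (hsum : ∑ j, Z j = 1) : CompleteOrthogonalIdempotents Z := by
  refine CompleteOrthogonalIdempotents.iff_ortho_complete.mpr ⟨fun i j hij => ?_, hsum⟩
  -- `Z j = Z j * (∑ i, Z i) * Z j` is a sum of the positive terms `(Z i * Z j)ᴴ * (Z i * Z j)`
  have hterm : ∀ i, (Z i * Z j)ᴴ * (Z i * Z j) = Z j * Z i * Z j := fun i => by
    rw [conjTranspose_mul, (hherm i).eq, (hherm j).eq, mul_assoc, ← mul_assoc (Z i),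
      (hidem i).eq, mul_assoc]
  have hnonneg : ∀ i, 0 ≤ (Z i * Z j)ᴴ * (Z i * Z j) := fun i => star_mul_self_nonneg _
  have htotal : ∑ i, (Z i * Z j)ᴴ * (Z i * Z j) = Z j := by
    simp only [hterm, ← Finset.mul_sum, ← Finset.sum_mul, hsum, mul_one, (hidem j).eq]
  have hdiag : (Z j * Z j)ᴴ * (Z j * Z j) = Z j := by rw [hterm, (hidem j).eq, (hidem j).eq]
  rw [← Finset.add_sum_erase _ _ (Finset.mem_univ j), hdiag] at htotal
  have hsum_off := add_eq_left.mp htotal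
  have hij_term := (Finset.sum_eq_zero_iff_of_nonneg fun i _ => hnonneg i).mp hsum_off i
    (Finset.mem_erase.mpr ⟨hij, Finset.mem_univ i⟩)
  exact conjTranspose_mul_self_eq_zero.mp hij_term

theorem trace_mul_eq_trace_sum_mul_mul {R n ι : Type*} [CommSemiring R] [Fintype n]
    [DecidableEq n] [Fintype ι] {Z : ι → Matrix n n R} (hidem : ∀ j, IsIdempotentElem (Z j))
    (hsum : ∑ j, Z j = 1) (δ L : Matrix n n R) (hL : ∀ j, Commute (Z j) L) :
    (δ * L).trace = ((∑ j, Z j * δ * Z j) * L).trace := by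
  have hterm : ∀ j, (Z j * δ * Z j * L).trace = (δ * (Z j * L)).trace := fun j => by
    have hZLZ : Z j * L * Z j = Z j * L := by rw [(hL j).eq, mul_assoc, (hidem j).eq]
    rw [mul_assoc, mul_assoc, trace_mul_comm, mul_assoc, hZLZ]
  calc (δ * L).trace = (δ * ((∑ j, Z j) * L)).trace := by rw [hsum, one_mul]
    _ = ((∑ j, Z j * δ * Z j) * L).trace := by
      simp only [Finset.sum_mul, Finset.mul_sum, trace_sum, hterm]

end Matrix

theorem trace_ln_Zmap_general {k nz : ℕ} (Z : Fin nz → Matrix (Fin k) (Fin k) ℂ)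
    (hZherm : ∀ j, (Z j).IsHermitian) (hZidem : ∀ j, Z j * Z j = Z j)
    (hZsum : ∑ j, Z j = 1)
    (δ : Matrix (Fin k) (Fin k) ℂ) :
    (δ * matExt Real.log (∑ j, Z j * δ * Z j)).trace
      = ((∑ j, Z j * δ * Z j) * matExt Real.log (∑ j, Z j * δ * Z j)).trace := by
  have hZ := completeOrthogonalIdempotents_of_isHermitian hZherm hZidem hZsum
  rw [matExt_eq_cfc]
  exact trace_mul_eq_trace_sum_mul_mul hZidem hZsum δ _ fun j =>
    ((hZ.commute_sum_mul_mul δ j).symm.cfc_real Real.log).symm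

/-- If `Z₁,…,Z_{n_z}` are Hermitian idempotents summing to the identity and
`𝒵(δ) := Σⱼ Zⱼ δ Zⱼ`, then for every Hermitian positive definite `δ`,
`Tr(δ ln(𝒵(δ))) = Tr(𝒵(δ) ln(𝒵(δ)))`. -/
theorem trace_ln_Zmap {k nz : ℕ} (Z : Fin nz → Matrix (Fin k) (Fin k) ℂ)
    (hZherm : ∀ j, (Z j).IsHermitian) (hZidem : ∀ j, Z j * Z j = Z j)
    (hZsum : ∑ j, Z j = 1)
    (δ : Matrix (Fin k) (Fin k) ℂ) (hδ : δ.PosDef) :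
    (δ * matExt Real.log (∑ j, Z j * δ * Z j)).trace
      = ((∑ j, Z j * δ * Z j) * matExt Real.log (∑ j, Z j * δ * Z j)).trace :=
  trace_ln_Zmap_general Z hZherm hZidem hZsum δ
end

section
/- Let U be a complex k×r matrix with orthonormal columns (U*U = I_r), let M be a k×k complex Hermitian matrix with U U* M = M, and let f : ℝ → ℝ be a function with f(0) = 0. Then Tr(F(M)) = Tr(F(U* M U)), where F denotes the matrix extension of f applied via a spectral decomposition (note U* M U is an r×r Hermitian matrix). -/
/-!
For Hermitian `A`, `Tr F(A)` is the sum of `f` over the roots of the characteristic polynomial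
of `A`, counted with multiplicity. Writing `M = U (U* M)` and `U* M U = (U* M) U`, the
characteristic polynomials of the two products agree up to a power of `X`, so their roots differ
only by copies of `0`, on which `f` vanishes.
-/

open Matrix

open Polynomial

theorem Matrix.IsHermitian.trace_matExt_eq_sum_roots {𝕜 : Type*} [RCLike 𝕜] {n : Type*}
    [Fintype n] [DecidableEq n] {A : Matrix n n 𝕜} (hA : A.IsHermitian) (f : ℝ → ℝ) :
    (matExt f A).trace = (A.charpoly.roots.map fun z => (f (RCLike.re z) : 𝕜)).sum := by
  have hV : star (hA.eigenvectorUnitary : Matrix n n 𝕜) * hA.eigenvectorUnitary = 1 :=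
    Matrix.mem_unitaryGroup_iff'.mp hA.eigenvectorUnitary.2
  rw [matExt, dif_pos hA, trace_mul_cycle, hV, one_mul, trace_diagonal,
    hA.roots_charpoly_eq_eigenvalues, Multiset.map_map]
  simp [Function.comp_def]

theorem Matrix.sum_map_roots_charpoly_mul_comm {R M : Type*} [CommRing R] [IsDomain R]
    [AddCommMonoid M] {m n : Type*} [Fintype m] [DecidableEq m] [Fintype n] [DecidableEq n]
    (A : Matrix m n R) (B : Matrix n m R) (g : R → M) (hg : g 0 = 0) :
    ((A * B).charpoly.roots.map g).sum = ((B * A).charpoly.roots.map g).sum := by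
  have h := congrArg (fun p : R[X] => (p.roots.map g).sum) (charpoly_mul_comm' A B)
  simpa [roots_mul, (monic_X_pow _).mul (charpoly_monic _) |>.ne_zero, roots_X_pow,
    Multiset.map_nsmul, Multiset.sum_nsmul, hg] using h

theorem trace_matExt_compress_general {k r : ℕ} (U : Matrix (Fin k) (Fin r) ℂ)
    (M : Matrix (Fin k) (Fin k) ℂ) (hM : M.IsHermitian) (hUM : U * Uᴴ * M = M)
    (f : ℝ → ℝ) (hf0 : f 0 = 0) :
    (matExt f M).trace = (matExt f (Uᴴ * M * U)).trace := by
  have hroots := sum_map_roots_charpoly_mul_comm U (Uᴴ * M)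
    (fun z => (f (RCLike.re z) : ℂ)) (by simp [hf0])
  rw [← Matrix.mul_assoc, hUM] at hroots
  rw [hM.trace_matExt_eq_sum_roots,
    (isHermitian_conjTranspose_mul_mul U hM).trace_matExt_eq_sum_roots]
  exact hroots

/-- Let `U` be a complex `k×r` matrix with orthonormal columns, `M` a `k×k` Hermitian matrix
with `U U* M = M`, and `f : ℝ → ℝ` with `f(0) = 0`. Then `Tr F(M) = Tr F(U* M U)`. -/
theorem trace_matExt_compress {k r : ℕ} (U : Matrix (Fin k) (Fin r) ℂ)
    (hU : Uᴴ * U = 1)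
    (M : Matrix (Fin k) (Fin k) ℂ) (hM : M.IsHermitian) (hUM : U * Uᴴ * M = M)
    (f : ℝ → ℝ) (hf0 : f 0 = 0) :
    (matExt f M).trace = (matExt f (Uᴴ * M * U)).trace :=
  trace_matExt_compress_general U M hM hUM f hf0
end
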